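/- Let H and K be complex Hilbert spaces and let T₁, T₂ : H → K be compact operators. Then for every integer k ≥ 1, the singular values of the composition T₁*T₂ : H → H satisfy μ_{2k}(T₁*T₂) ≤ μ_{2k−1}(T₁*T₂) ≤ μ_k(T₁) · μ_k(T₂). -/

import Mathlib

open scoped Cardinal

/-- The `j`-th approximation number (`j = 0, 1, 2, …`) of a continuous linear map between
normed spaces: the distance from `T` to operators of rank at most `j`.  For a compact
operator between Hilbert spaces this equals the `(j+1)`-st singular value `μ_{j+1}(T)`,
i.e. the `(j+1)`-st eigenvalue (in decreasing order, with multiplicity) of `(T*T)^{1/2}`. -/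
noncomputable def sVal {H K : Type*} [NormedAddCommGroup H] [NormedSpace ℂ H]
    [NormedAddCommGroup K] [NormedSpace ℂ K] (T : H →L[ℂ] K) (j : ℕ) : ℝ :=
  sInf ((fun F : H →L[ℂ] K => ‖T - F‖) ''
    {F : H →L[ℂ] K | Module.rank ℂ (LinearMap.range F.toLinearMap) ≤ (j : Cardinal)})

section aux

variable {H K : Type*} [NormedAddCommGroup H] [InnerProductSpace ℂ H] [CompleteSpace H]
    [NormedAddCommGroup K] [InnerProductSpace ℂ K] [CompleteSpace K]

lemma sVal_bddBelow (T : H →L[ℂ] K) (j : ℕ) :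
    BddBelow ((fun F : H →L[ℂ] K => ‖T - F‖) ''
      {F : H →L[ℂ] K | Module.rank ℂ (LinearMap.range F.toLinearMap) ≤ (j : Cardinal)}) :=
  ⟨0, by rintro x ⟨F, _, rfl⟩; exact norm_nonneg _⟩

lemma sVal_set_nonempty (T : H →L[ℂ] K) (j : ℕ) :
    ((fun F : H →L[ℂ] K => ‖T - F‖) ''
      {F : H →L[ℂ] K | Module.rank ℂ (LinearMap.range F.toLinearMap) ≤ (j : Cardinal)}).Nonempty :=
  ⟨‖T - 0‖, 0, by simp, rfl⟩

lemma sVal_le (T : H →L[ℂ] K) (j : ℕ) (F : H →L[ℂ] K)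
    (hF : Module.rank ℂ (LinearMap.range F.toLinearMap) ≤ (j : Cardinal)) :
    sVal T j ≤ ‖T - F‖ :=
  csInf_le (sVal_bddBelow T j) ⟨F, hF, rfl⟩

lemma sVal_nonneg (T : H →L[ℂ] K) (j : ℕ) : 0 ≤ sVal T j :=
  le_csInf (sVal_set_nonempty T j) (by rintro x ⟨F, _, rfl⟩; exact norm_nonneg _)

lemma sVal_mono (T : H →L[ℂ] K) {i j : ℕ} (hij : i ≤ j) : sVal T j ≤ sVal T i := by
  refine csInf_le_csInf (sVal_bddBelow T j) (sVal_set_nonempty T i) ?_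
  refine Set.image_mono fun F hF => ?_
  simp only [Set.mem_setOf_eq] at hF ⊢
  exact le_trans hF (by exact_mod_cast hij)

lemma sVal_exists (T : H →L[ℂ] K) (j : ℕ) {ε : ℝ} (hε : 0 < ε) :
    ∃ F : H →L[ℂ] K, Module.rank ℂ (LinearMap.range F.toLinearMap) ≤ (j : Cardinal) ∧
      ‖T - F‖ < sVal T j + ε := by
  obtain ⟨a, ⟨F, hF, rfl⟩, ha⟩ := Real.lt_sInf_add_pos (sVal_set_nonempty T j) hε
  exact ⟨F, hF, ha⟩

lemma rank_adjoint_le (F : H →L[ℂ] K) (n : ℕ)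
    (h : Module.rank ℂ (LinearMap.range F.toLinearMap) ≤ (n : Cardinal)) :
    Module.rank ℂ (LinearMap.range (ContinuousLinearMap.adjoint F).toLinearMap)
      ≤ (n : Cardinal) := by
  set V : Submodule ℂ K := LinearMap.range F.toLinearMap with hV
  haveI : Module.Finite ℂ V :=
    Module.rank_lt_aleph0_iff.mp (h.trans_lt (Cardinal.nat_lt_aleph0 n))
  haveI : FiniteDimensional ℂ V := ‹_›
  set A := ContinuousLinearMap.adjoint F with hA
  have key : ∀ y : K, A y = A ((V.orthogonalProjectionOnto y : K)) := by
    intro y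
    have hmem : y - (V.orthogonalProjectionOnto y : K) ∈ Vᗮ :=
      Submodule.sub_starProjection_mem_orthogonal y
    have hz : A (y - (V.orthogonalProjectionOnto y : K)) = 0 := by
      rw [← @inner_self_eq_zero ℂ]
      rw [ContinuousLinearMap.adjoint_inner_left]
      refine (Submodule.mem_orthogonal' V _).mp hmem _ ?_
      exact ⟨A (y - (V.orthogonalProjectionOnto y : K)), rfl⟩
    have := map_sub A y ((V.orthogonalProjectionOnto y : K))
    rw [hz] at this
    exact sub_eq_zero.mp this.symm
  -- range A ≤ range (A ∘ subtype)
  have hsub : LinearMap.range A.toLinearMap ≤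
      LinearMap.range (A.toLinearMap ∘ₗ V.subtype) := by
    rintro x ⟨y, rfl⟩
    exact ⟨V.orthogonalProjectionOnto y, (key y).symm⟩
  refine (Submodule.rank_mono hsub).trans ?_
  have h1 := LinearMap.lift_rank_comp_le_right V.subtype A.toLinearMap
  have h2 : LinearMap.rank V.subtype ≤ (n : Cardinal) := by
    rw [LinearMap.rank, Submodule.range_subtype]
    exact (Submodule.rank_mono (le_refl V)).trans h
  calc Module.rank ℂ (LinearMap.range (A.toLinearMap ∘ₗ V.subtype))
      ≤ (n : Cardinal) := by
        have := h1.trans (Cardinal.lift_le.mpr h2)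
        rw [Cardinal.lift_natCast] at this
        rw [← Cardinal.lift_le.{_}]
        exact le_trans this (by rw [Cardinal.lift_natCast])

end aux

/-- Ky Fan type inequality for singular values: for compact `T₁, T₂ : H → K` and `k ≥ 1`,
`μ_{2k}(T₁*T₂) ≤ μ_{2k-1}(T₁*T₂) ≤ μ_k(T₁) μ_k(T₂)` (here `μ_j(A) = sVal A (j-1)`). -/
theorem stmt_2 {H K : Type*}
    [NormedAddCommGroup H] [InnerProductSpace ℂ H] [CompleteSpace H]
    [NormedAddCommGroup K] [InnerProductSpace ℂ K] [CompleteSpace K]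
    (T₁ T₂ : H →L[ℂ] K)
    (hT₁ : IsCompactOperator (T₁ : H → K)) (hT₂ : IsCompactOperator (T₂ : H → K))
    (k : ℕ) (hk : 1 ≤ k) :
    sVal ((ContinuousLinearMap.adjoint T₁).comp T₂) (2 * k - 1) ≤
        sVal ((ContinuousLinearMap.adjoint T₁).comp T₂) (2 * k - 2) ∧
      sVal ((ContinuousLinearMap.adjoint T₁).comp T₂) (2 * k - 2) ≤
        sVal T₁ (k - 1) * sVal T₂ (k - 1) := by
  set A := (ContinuousLinearMap.adjoint T₁).comp T₂ with hAdef
  refine ⟨sVal_mono A (by omega), ?_⟩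
  set s₁ := sVal T₁ (k - 1) with hs₁
  set s₂ := sVal T₂ (k - 1) with hs₂
  have key : ∀ ε : ℝ, 0 < ε → sVal A (2 * k - 2) ≤ (s₁ + ε) * (s₂ + ε) := by
    intro ε hε
    obtain ⟨F₁, hF₁r, hF₁⟩ := sVal_exists T₁ (k - 1) hε
    obtain ⟨F₂, hF₂r, hF₂⟩ := sVal_exists T₂ (k - 1) hε
    set G : H →L[ℂ] H := ((ContinuousLinearMap.adjoint F₁).comp T₂) +
      ((ContinuousLinearMap.adjoint (T₁ - F₁)).comp F₂) with hGdef
    have hAG : A - G = (ContinuousLinearMap.adjoint (T₁ - F₁)).comp (T₂ - F₂) := by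
      rw [map_sub, ContinuousLinearMap.sub_comp, ContinuousLinearMap.comp_sub,
        ContinuousLinearMap.comp_sub, hGdef, map_sub, ContinuousLinearMap.sub_comp]
      abel
    have hrank : Module.rank ℂ (LinearMap.range G.toLinearMap) ≤ ((2 * k - 2 : ℕ) : Cardinal) := by
      have hG : G.toLinearMap =
          ((ContinuousLinearMap.adjoint F₁).toLinearMap ∘ₗ T₂.toLinearMap) +
          ((ContinuousLinearMap.adjoint (T₁ - F₁)).toLinearMap ∘ₗ F₂.toLinearMap) := rfl
      rw [hG]
      refine (LinearMap.rank_add_le _ _).trans ?_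
      have h1 : LinearMap.rank
          ((ContinuousLinearMap.adjoint F₁).toLinearMap ∘ₗ T₂.toLinearMap) ≤
          ((k - 1 : ℕ) : Cardinal) :=
        (LinearMap.rank_comp_le_left _ _).trans (rank_adjoint_le F₁ (k - 1) hF₁r)
      have h2 : LinearMap.rank
          ((ContinuousLinearMap.adjoint (T₁ - F₁)).toLinearMap ∘ₗ F₂.toLinearMap) ≤
          ((k - 1 : ℕ) : Cardinal) := by
        have := LinearMap.lift_rank_comp_le_right F₂.toLinearMap
          (ContinuousLinearMap.adjoint (T₁ - F₁)).toLinearMap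
        have h2' := this.trans (Cardinal.lift_le.mpr hF₂r)
        rw [Cardinal.lift_natCast] at h2'
        rw [← Cardinal.lift_le.{_}]
        exact le_trans h2' (by rw [Cardinal.lift_natCast])
      refine le_trans (add_le_add h1 h2) ?_
      rw [← Nat.cast_add]
      have he : (k - 1) + (k - 1) = 2 * k - 2 := by omega
      rw [he]
    have hnorm : ‖A - G‖ ≤ (s₁ + ε) * (s₂ + ε) := by
      rw [hAG]
      refine (ContinuousLinearMap.opNorm_comp_le _ _).trans ?_
      have hadj : ‖ContinuousLinearMap.adjoint (T₁ - F₁)‖ = ‖T₁ - F₁‖ :=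
        LinearIsometryEquiv.norm_map ContinuousLinearMap.adjoint (T₁ - F₁)
      rw [hadj]
      exact mul_le_mul hF₁.le hF₂.le (norm_nonneg _)
        (le_trans (sVal_nonneg T₁ (k - 1)) (by linarith))
    exact (sVal_le A (2 * k - 2) G hrank).trans hnorm
  have htend : Filter.Tendsto (fun ε : ℝ => (s₁ + ε) * (s₂ + ε))
      (nhdsWithin 0 (Set.Ioi 0)) (nhds (s₁ * s₂)) := by
    have hc : Continuous (fun ε : ℝ => (s₁ + ε) * (s₂ + ε)) := by continuity
    have := (hc.tendsto 0).mono_left (nhdsWithin_le_nhds (s := Set.Ioi (0 : ℝ)))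
    simpa using this
  exact ge_of_tendsto htend (Filter.eventually_of_mem self_mem_nhdsWithin
    fun ε hε => key ε hε)
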